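/- Let p be a prime, e ≥ 1 an integer, q = p^e, and A any l×l integer matrix. Then the set of row vectors t ∈ (ℚ/ℤ)^l with t·(q·A) = t (equivalently t·(q·A − I) = 0) is finite of cardinality |det(q·A − I)|, this cardinality is coprime to p, and every such t has finite additive order coprime to p, i.e., all solutions lie in (ℚ_{p'}/ℤ)^l. -/

import Mathlib

/-!
Put `M = q • A - 1`. Modulo `q` we have `M ≡ -1`, so `det M ≡ ±1 (mod q)`: the determinant is
coprime to `q`, hence to `p`, and in particular nonzero. Over `ℚ` the matrix `M` is invertible,
and the solutions of `t · M = 0` in `(ℚ/ℤ)^l` are exactly the classes of `v · M⁻¹` with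
`v ∈ ℤ^l`; such a class vanishes iff `v ∈ ℤ^l · M`. So the solution group is `ℤ^l ⧸ ℤ^l · M`,
whose order is `|det M|` (Smith normal form). Finally `t · M = 0` gives
`det M • t = t · (M · adj M) = 0`, so the order of every coordinate divides `|det M|`.
-/

open Matrix

local notation "𝕋" => AddCircle (1 : ℚ)

lemma AddCircle.coe_comp_eq_zero_iff {m : Type*} {r : m → ℚ} :
    (fun i => (r i : 𝕋)) = 0 ↔ ∃ v : m → ℤ, r = fun i => (v i : ℚ) := by
  simp only [funext_iff, Pi.zero_apply, AddCircle.coe_eq_zero_iff, zsmul_eq_mul, mul_one,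
    eq_comm (b := r _)]
  exact Classical.skolem

namespace Matrix

section ZVecMul

variable {l m n G : Type*} [Fintype l] [Fintype m] [AddCommGroup G]

def zvecMul (M : Matrix m n ℤ) (t : m → G) : n → G := fun j => ∑ i, M i j • t i

@[simp]
lemma zvecMul_zero (M : Matrix m n ℤ) : M.zvecMul (0 : m → G) = 0 := by
  ext j; simp [zvecMul]

lemma sub_zvecMul (M N : Matrix m n ℤ) (t : m → G) :
    (M - N).zvecMul t = M.zvecMul t - N.zvecMul t := by
  ext j; simp [zvecMul, sub_smul]

lemma one_zvecMul [DecidableEq m] (t : m → G) : (1 : Matrix m m ℤ).zvecMul t = t := by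
  ext j; simp [zvecMul, one_apply, ite_smul]

lemma smul_zvecMul (c : ℤ) (M : Matrix m n ℤ) (t : m → G) :
    (c • M).zvecMul t = c • M.zvecMul t := by
  ext j; simp [zvecMul, Finset.smul_sum, mul_smul]

lemma zvecMul_zvecMul (M : Matrix l m ℤ) (N : Matrix m n ℤ) (t : l → G) :
    N.zvecMul (M.zvecMul t) = (M * N).zvecMul t := by
  ext k
  simp only [zvecMul, mul_apply, Finset.smul_sum, Finset.sum_smul, smul_smul]
  rw [Finset.sum_comm]
  simp_rw [mul_comm]

lemma det_smul_eq_zero_of_zvecMul_eq_zero [DecidableEq m] {M : Matrix m m ℤ} {t : m → G}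
    (h : M.zvecMul t = 0) : M.det • t = 0 := by
  rw [← one_zvecMul t, ← smul_zvecMul, ← mul_adjugate, ← zvecMul_zvecMul, h, zvecMul_zero]

lemma addOrderOf_dvd_natAbs_det_of_zvecMul_eq_zero [DecidableEq m] {M : Matrix m m ℤ}
    {t : m → G} (h : M.zvecMul t = 0) (i : m) : addOrderOf (t i) ∣ M.det.natAbs :=
  Int.natCast_dvd.1 <| addOrderOf_dvd_iff_zsmul_eq_zero.2 <|
    congrFun (det_smul_eq_zero_of_zvecMul_eq_zero h) i

end ZVecMul

lemma coprime_natAbs_det_smul_sub_one {m : Type*} [Fintype m] [DecidableEq m] (q : ℕ)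
    (A : Matrix m m ℤ) : Nat.Coprime ((q : ℤ) • A - 1).det.natAbs q := by
  have hunit : IsUnit ((((q : ℤ) • A - 1).det : ℤ) : ZMod q) := by
    have hmap : ((q : ℤ) • A - 1).map (Int.cast : ℤ → ZMod q) = -1 := by
      ext i j
      simp only [map_apply, sub_apply, smul_apply, smul_eq_mul, Int.cast_sub, Int.cast_mul,
        Int.cast_natCast, ZMod.natCast_self, zero_mul, zero_sub, neg_apply]
      by_cases h : i = j <;> simp [h, one_apply]
    rw [Int.cast_det, hmap, det_neg, det_one, mul_one]
    exact isUnit_neg_one.pow _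
  rw [ZMod.coe_int_isUnit_iff_isCoprime, Int.isCoprime_iff_nat_coprime] at hunit
  exact hunit.symm

lemma zvecMul_coe {m n : Type*} [Fintype m] (M : Matrix m n ℤ) (r : m → ℚ) :
    M.zvecMul (fun i => (r i : 𝕋)) = fun j => ((r ᵥ* M.map (↑)) j : 𝕋) := by
  ext j
  simp only [zvecMul, vecMul, dotProduct, map_apply, ← AddCircle.coe_zsmul, zsmul_eq_mul,
    mul_comm (r _)]
  exact (map_sum (QuotientAddGroup.mk' (AddSubgroup.zmultiples (1 : ℚ))) _ _).symm

lemma intCast_vecMul_map {m n : Type*} [Fintype m] (M : Matrix m n ℤ) (w : m → ℤ) :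
    (fun i => (w i : ℚ)) ᵥ* M.map (↑) = fun j => ((w ᵥ* M) j : ℚ) := by
  ext j
  exact (RingHom.map_vecMul (Int.castRingHom ℚ) M w j).symm

section Solutions

variable {ι : Type*} [Fintype ι] [DecidableEq ι] {M : Matrix ι ι ℤ}

lemma isUnit_det_map_intCast (hM : M.det ≠ 0) : IsUnit (M.map (Int.cast : ℤ → ℚ)).det := by
  rw [← Int.cast_det, isUnit_iff_ne_zero]
  exact_mod_cast hM

variable (M) in
/-- `v ↦ v · M⁻¹ mod ℤ^ι`, which parametrises the solutions of `t · M = 0` in `(ℚ/ℤ)^ι`. -/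
noncomputable def vecMulInvModOne : (ι → ℤ) →+ (ι → 𝕋) :=
  (AddMonoidHom.compLeft (QuotientAddGroup.mk' _) ι).comp
    ((M.map (Int.cast : ℤ → ℚ))⁻¹.vecMulLinear.toAddMonoidHom.comp
      (AddMonoidHom.compLeft (Int.castAddHom ℚ) ι))

lemma vecMulInvModOne_apply (v : ι → ℤ) :
    M.vecMulInvModOne v = fun j => (((fun i => (v i : ℚ)) ᵥ* (M.map (↑))⁻¹) j : 𝕋) :=
  rfl

lemma range_vecMulInvModOne (hM : M.det ≠ 0) :
    Set.range M.vecMulInvModOne = {t | M.zvecMul t = 0} := by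
  have hinv := mul_nonsing_inv _ (isUnit_det_map_intCast hM)
  have hinv' := nonsing_inv_mul _ (isUnit_det_map_intCast hM)
  ext t
  constructor
  · rintro ⟨v, rfl⟩
    rw [Set.mem_ofPred_eq, vecMulInvModOne_apply, zvecMul_coe, vecMul_vecMul, hinv', vecMul_one,
      AddCircle.coe_comp_eq_zero_iff]
    exact ⟨v, rfl⟩
  · intro ht
    obtain ⟨r, rfl⟩ : ∃ r : ι → ℚ, (fun i => (r i : 𝕋)) = t :=
      ⟨fun i => (QuotientAddGroup.mk_surjective (t i)).choose,
        funext fun i => (QuotientAddGroup.mk_surjective (t i)).choose_spec⟩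
    rw [Set.mem_ofPred_eq, zvecMul_coe, AddCircle.coe_comp_eq_zero_iff] at ht
    obtain ⟨v, hv⟩ := ht
    refine ⟨v, ?_⟩
    rw [vecMulInvModOne_apply, ← hv, vecMul_vecMul, hinv, vecMul_one]

lemma ker_vecMulInvModOne (hM : M.det ≠ 0) :
    M.vecMulInvModOne.ker = (LinearMap.range M.vecMulLinear).toAddSubgroup := by
  have hinv := mul_nonsing_inv _ (isUnit_det_map_intCast hM)
  have hinv' := nonsing_inv_mul _ (isUnit_det_map_intCast hM)
  ext v
  rw [AddMonoidHom.mem_ker, vecMulInvModOne_apply, AddCircle.coe_comp_eq_zero_iff,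
    Submodule.mem_toAddSubgroup, LinearMap.mem_range]
  constructor
  · rintro ⟨w, hw⟩
    refine ⟨w, ?_⟩
    have := congrArg (· ᵥ* M.map (Int.cast : ℤ → ℚ)) hw
    simp only [vecMul_vecMul, hinv', vecMul_one, intCast_vecMul_map] at this
    ext j
    exact_mod_cast (congrFun this j).symm
  · rintro ⟨w, rfl⟩
    refine ⟨w, ?_⟩
    rw [vecMulLinear_apply, ← intCast_vecMul_map, vecMul_vecMul, hinv, vecMul_one]

lemma det_vecMulLinear {R : Type*} [CommRing R] (M : Matrix ι ι R) :
    LinearMap.det M.vecMulLinear = M.det := by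
  rw [← mulVecLin_transpose, ← toLin'_apply', LinearMap.det_toLin', det_transpose]

lemma natCard_quotient_range_vecMulLinear (hM : M.det ≠ 0) :
    Nat.card ((ι → ℤ) ⧸ LinearMap.range M.vecMulLinear) = M.det.natAbs := by
  have hinj : Function.Injective M.vecMulLinear := (injective_iff_map_eq_zero _).2
    fun v hv => by_contra fun h => hM (exists_vecMul_eq_zero_iff.1 ⟨v, h, hv⟩)
  rw [← Submodule.natAbs_det_equiv _ (LinearEquiv.ofInjective _ hinj), ← det_vecMulLinear]
  rfl

lemma natCard_setOf_zvecMul_eq_zero (hM : M.det ≠ 0) :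
    Nat.card {t : ι → 𝕋 | M.zvecMul t = 0} = M.det.natAbs := by
  rw [← range_vecMulInvModOne hM, ← natCard_quotient_range_vecMulLinear hM]
  exact Nat.card_congr ((QuotientAddGroup.quotientKerEquivRange _).symm.trans
    (QuotientAddGroup.quotientAddEquivOfEq (ker_vecMulInvModOne hM))).toEquiv

end Solutions

end Matrix

/-- Let `p` be a prime, `q = p^e` with `e ≥ 1`, and `A` any `l × l` integer
matrix.  The set of row vectors `t ∈ (ℚ/ℤ)^l` with `t · (q A) = t`
(equivalently `t · (q A - I) = 0`) is finite of cardinality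
`|det (q A - I)|`, this cardinality is coprime to `p`, and every solution `t`
has all components of finite additive order coprime to `p`, i.e. all
solutions lie in `(ℚ_{p'}/ℤ)^l`. -/
theorem fixedPoints_qA_finite_coprime
    {l : ℕ} (p : ℕ) (hp : p.Prime) (e : ℕ) (he : 1 ≤ e) (q : ℕ) (hq : q = p ^ e)
    (A : Matrix (Fin l) (Fin l) ℤ)
    (S : Set (Fin l → AddCircle (1 : ℚ)))
    (hS : S = {t | ∀ j, ∑ i, ((q : ℤ) * A i j) • t i = t j}) :
    S.Finite ∧
    Nat.card S = ((q : ℤ) • A - 1).det.natAbs ∧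
    Nat.Coprime ((q : ℤ) • A - 1).det.natAbs p ∧
    ∀ t ∈ S, ∀ i : Fin l, 0 < addOrderOf (t i) ∧ (addOrderOf (t i)).Coprime p := by
  set M := (q : ℤ) • A - 1
  have hS' : S = {t | M.zvecMul t = 0} := by
    ext t
    rw [hS, Set.mem_ofPred_eq, Set.mem_ofPred_eq, sub_zvecMul, one_zvecMul, sub_eq_zero,
      funext_iff]
    rfl
  have hcop : M.det.natAbs.Coprime p :=
    (coprime_natAbs_det_smul_sub_one q A).coprime_dvd_right (hq ▸ dvd_pow_self p (by omega))
  have hdet : M.det.natAbs ≠ 0 := fun h => hp.ne_one (by simpa [h] using hcop)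
  have hcard : Nat.card S = M.det.natAbs :=
    hS' ▸ natCard_setOf_zvecMul_eq_zero (Int.natAbs_ne_zero.1 hdet)
  refine ⟨Set.finite_coe_iff.1 (Nat.finite_of_card_ne_zero (hcard ▸ hdet)), hcard, hcop, ?_⟩
  intro t ht i
  rw [hS'] at ht
  have horder := addOrderOf_dvd_natAbs_det_of_zvecMul_eq_zero ht i
  exact ⟨Nat.pos_of_dvd_of_pos horder (Nat.pos_of_ne_zero hdet), hcop.coprime_dvd_left horder⟩
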